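/- The 𝔽₂-algebra 𝔽₂[X, Y]/(X² + Y² − 1) is isomorphic, as an 𝔽₂-algebra, to (𝔽₂[T])[z]/(z²): explicitly, X² + Y² − 1 = (X + Y + 1)² in 𝔽₂[X, Y], and an isomorphism sends T to the class of X and z to the class of X + Y + 1. In particular, 𝔽₂[X, Y]/(X² + Y² − 1) is not a reduced ring, and consequently the ℤ₂-algebra ℤ₂[X, Y]/(X² + Y² − 1) is not formally smooth over ℤ₂. -/

import Mathlib

/-!
In characteristic two `x² + y² - 1 = (x + y + 1)²`, so after the substitution `z = x + y + 1`
the circle becomes the double line `k[T][z]/(z²)`, and `z` is a nonzero nilpotent.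

If the circle were formally smooth over `R`, then for any nonzero `R`-algebra `k` with `2 = 0` the
`k[T][z]/(z²)`-point `(T, z - T - 1)` would lift along the square-zero thickening
`k[T][z]/(z³) → k[T][z]/(z²)`. The lift `c` of `x + y + 1` lifts `z` and satisfies `c² = 0`,
yet in characteristic two every lift of `z` modulo `(z²)` squares to `z² ≠ 0`.
-/

open MvPolynomial

theorem two_eq_zero_of_algebra {R S : Type*} [CommRing R] [Ring S] [Algebra R S]
    (h2 : (2 : R) = 0) : (2 : S) = 0 := by
  rw [← map_ofNat (algebraMap R S) 2, h2, map_zero]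

section CharTwo

variable {R : Type*} [CommRing R] (h2 : (2 : R) = 0)
include h2

theorem sq_add_sq_sub_one_eq_of_two_eq_zero (x y : R) :
    x ^ 2 + y ^ 2 - 1 = (x + y + 1) ^ 2 := by
  linear_combination (-(x * y + x + y + 1)) * h2

theorem sq_eq_sq_of_sub_mem_of_two_eq_zero {I : Ideal R} (hI : I ^ 2 = ⊥) {a b : R}
    (h : a - b ∈ I) : a ^ 2 = b ^ 2 := by
  have hsq : (a - b) ^ 2 = 0 := by
    rw [← Ideal.mem_bot, ← hI]
    exact Ideal.pow_mem_pow h 2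
  linear_combination hsq + (a * b - b ^ 2) * h2

end CharTwo

abbrev TruncPoly (A : Type*) [CommRing A] (n : ℕ) : Type _ :=
  Polynomial A ⧸ Ideal.span {(Polynomial.X : Polynomial A) ^ n}

namespace TruncPoly

variable {A : Type*} [CommRing A] {n : ℕ}

theorem mk_X_pow_eq_zero {m : ℕ} (hm : n ≤ m) :
    Ideal.Quotient.mk _ (Polynomial.X ^ m) = (0 : TruncPoly A n) :=
  Ideal.Quotient.eq_zero_iff_mem.mpr (Ideal.mem_span_singleton.mpr (pow_dvd_pow _ hm))

theorem mk_X_pow_ne_zero [Nontrivial A] {k : ℕ} (hk : k < n) :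
    Ideal.Quotient.mk _ (Polynomial.X ^ k) ≠ (0 : TruncPoly A n) := by
  rw [Ne, Ideal.Quotient.eq_zero_iff_mem, Ideal.mem_span_singleton, Polynomial.X_pow_dvd_iff]
  exact fun h => one_ne_zero ((Polynomial.coeff_X_pow_self k).symm.trans (h k hk) : (1 : A) = 0)

theorem not_isReduced [Nontrivial A] (hn : 2 ≤ n) : ¬ IsReduced (TruncPoly A n) := by
  intro _
  have hz : IsNilpotent (Ideal.Quotient.mk _ Polynomial.X : TruncPoly A n) :=
    ⟨n, by rw [← map_pow, mk_X_pow_eq_zero le_rfl]⟩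
  exact mk_X_pow_ne_zero (A := A) (k := 1) hn (by rw [pow_one]; exact hz.eq_zero)

end TruncPoly

noncomputable abbrev circlePoly (R : Type*) [CommRing R] : MvPolynomial (Fin 2) R :=
  X 0 ^ 2 + X 1 ^ 2 - 1

abbrev CircleRing (R : Type*) [CommRing R] : Type _ :=
  MvPolynomial (Fin 2) R ⧸ Ideal.span {circlePoly R}

namespace CircleRing

variable {R S : Type*} [CommRing R] [CommRing S] [Algebra R S]

theorem mk_circlePoly : Ideal.Quotient.mk _ (circlePoly R) = (0 : CircleRing R) :=
  Ideal.Quotient.eq_zero_iff_mem.mpr (Ideal.subset_span rfl)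

section CharTwo

variable (h2 : (2 : S) = 0)
include h2

theorem sq_add_add_one_eq_zero (g : CircleRing R →ₐ[R] S) :
    (g (Ideal.Quotient.mk _ (X 0)) + g (Ideal.Quotient.mk _ (X 1)) + 1) ^ 2 = 0 := by
  have h := congrArg g (mk_circlePoly (R := R))
  simp only [circlePoly, map_sub, map_add, map_pow, map_one, map_zero] at h
  rw [← h, sq_add_sq_sub_one_eq_of_two_eq_zero h2]

/-- In characteristic two, a point of the circle over `S` is a pair `(a, b)` with
`(a + b + 1)² = 0`. -/
noncomputable def lift (a b : S) (hab : (a + b + 1) ^ 2 = 0) : CircleRing R →ₐ[R] S :=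
  Ideal.Quotient.liftₐ _ (aeval ![a, b]) fun p hp => by
    obtain ⟨q, rfl⟩ := Ideal.mem_span_singleton'.mp hp
    simp [sq_add_sq_sub_one_eq_of_two_eq_zero h2, hab]

@[simp]
theorem lift_mk (a b : S) (hab : (a + b + 1) ^ 2 = 0) (p : MvPolynomial (Fin 2) R) :
    lift h2 a b hab (Ideal.Quotient.mk _ p) = aeval ![a, b] p :=
  rfl

end CharTwo

end CircleRing

section CircleEquiv

variable {R : Type*} [CommRing R] (h2 : (2 : R) = 0)
include h2

namespace TruncPoly

noncomputable def toCircleRing : TruncPoly (Polynomial R) 2 →ₐ[R] CircleRing R :=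
  Ideal.Quotient.liftₐ _
    (Polynomial.aevalTower (Polynomial.aeval (Ideal.Quotient.mk _ (X 0)))
      (Ideal.Quotient.mk _ (X 0 + X 1 + 1))) fun p hp => by
    obtain ⟨q, rfl⟩ := Ideal.mem_span_singleton'.mp hp
    rw [map_mul, map_pow, Polynomial.aevalTower_X, ← map_pow,
      ← sq_add_sq_sub_one_eq_of_two_eq_zero (two_eq_zero_of_algebra h2), CircleRing.mk_circlePoly,
      mul_zero]

@[simp]
theorem toCircleRing_mk (p : Polynomial (Polynomial R)) :
    toCircleRing h2 (Ideal.Quotient.mk _ p) =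
      Polynomial.aevalTower (Polynomial.aeval (Ideal.Quotient.mk _ (X 0)))
        (Ideal.Quotient.mk _ (X 0 + X 1 + 1)) p :=
  rfl

end TruncPoly

namespace CircleRing

noncomputable def toTruncPoly : CircleRing R →ₐ[R] TruncPoly (Polynomial R) 2 :=
  lift (two_eq_zero_of_algebra h2) (Ideal.Quotient.mk _ (Polynomial.C Polynomial.X))
    (Ideal.Quotient.mk _ (Polynomial.X - Polynomial.C Polynomial.X - 1)) <| by
    rw [← map_add, ← map_one (Ideal.Quotient.mk _), ← map_add, ← map_pow,
      ← TruncPoly.mk_X_pow_eq_zero le_rfl]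
    ring_nf

/-- The substitution `T ↦ x`, `z ↦ x + y + 1`, whose inverse is `x ↦ T`, `y ↦ z - T - 1`. -/
noncomputable def equivTruncPoly : TruncPoly (Polynomial R) 2 ≃ₐ[R] CircleRing R :=
  AlgEquiv.ofAlgHom (TruncPoly.toCircleRing h2) (toTruncPoly h2)
    (by
      refine Ideal.Quotient.algHom_ext R (MvPolynomial.algHom_ext fun i => ?_)
      fin_cases i
      · simp [toTruncPoly]
      · simp [toTruncPoly]
        ring)
    (by
      refine Ideal.Quotient.algHom_ext R
        (Polynomial.algHom_ext' (Polynomial.algHom_ext ?_) ?_)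
      · simp [toTruncPoly]
      · simp [toTruncPoly]
        ring)

theorem equivTruncPoly_mk_C_X :
    equivTruncPoly h2 (Ideal.Quotient.mk _ (Polynomial.C Polynomial.X)) =
      Ideal.Quotient.mk _ (X 0) :=
  (Polynomial.aevalTower_C _ _ _).trans (Polynomial.aeval_X _)

theorem equivTruncPoly_mk_X :
    equivTruncPoly h2 (Ideal.Quotient.mk _ Polynomial.X) = Ideal.Quotient.mk _ (X 0 + X 1 + 1) :=
  Polynomial.aevalTower_X _ _

theorem not_isReduced [Nontrivial R] : ¬ IsReduced (CircleRing R) := fun _ =>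
  TruncPoly.not_isReduced le_rfl
    (isReduced_of_injective (equivTruncPoly h2).toAlgHom (equivTruncPoly h2).injective)

end CircleRing

end CircleEquiv

namespace CircleRing

theorem not_formallySmooth {R k : Type*} [CommRing R] [CommRing k] [Nontrivial k] [Algebra R k]
    (h2 : (2 : k) = 0) : ¬ Algebra.FormallySmooth R (CircleRing R) := by
  intro _
  let z : TruncPoly (Polynomial k) 3 := Ideal.Quotient.mk _ Polynomial.X
  let T : TruncPoly (Polynomial k) 3 := Ideal.Quotient.mk _ (Polynomial.C Polynomial.X)
  let I : Ideal (TruncPoly (Polynomial k) 3) := Ideal.span {z ^ 2}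
  have hI : I ^ 2 = ⊥ := by
    rw [Ideal.span_singleton_pow, Ideal.span_singleton_eq_bot, ← pow_mul, ← map_pow]
    exact TruncPoly.mk_X_pow_eq_zero (by norm_num)
  have h2C : (2 : TruncPoly (Polynomial k) 3) = 0 := two_eq_zero_of_algebra h2
  have h2I : (2 : TruncPoly (Polynomial k) 3 ⧸ I) = 0 := two_eq_zero_of_algebra h2
  let π : CircleRing R →ₐ[R] TruncPoly (Polynomial k) 3 ⧸ I :=
    lift h2I (Ideal.Quotient.mk I T) (Ideal.Quotient.mk I (z - T - 1)) <| by
      rw [← map_one (Ideal.Quotient.mk I), ← map_add, ← map_add, ← map_pow,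
        Ideal.Quotient.eq_zero_iff_mem, show T + (z - T - 1) + 1 = z by ring]
      exact Ideal.subset_span rfl
  let g := Algebra.FormallySmooth.lift I ⟨2, hI⟩ π
  have hlift : g (Ideal.Quotient.mk _ (X 0)) + g (Ideal.Quotient.mk _ (X 1)) + 1 - z ∈ I := by
    have hg (x : CircleRing R) : Ideal.Quotient.mk I (g x) = π x :=
      Algebra.FormallySmooth.mk_lift _ _ _ x
    rw [← Ideal.Quotient.eq_zero_iff_mem, map_sub, map_add, map_add, map_one, hg, hg]
    simp only [π, lift_mk, aeval_X, Matrix.cons_val_zero, Matrix.cons_val_one, map_sub, map_one]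
    ring
  have hz : z ^ 2 = 0 := by
    rw [← sq_eq_sq_of_sub_mem_of_two_eq_zero h2C hI hlift, sq_add_add_one_eq_zero h2C]
  exact TruncPoly.mk_X_pow_ne_zero (by norm_num : 2 < 3) (by rw [map_pow]; exact hz)

end CircleRing

/-- **Example 3.15 (Edixhoven's example), non-smoothness part**: in `𝔽₂[X,Y]` one has
`X² + Y² − 1 = (X + Y + 1)²`; there is an `𝔽₂`-algebra isomorphism
`𝔽₂[T][z]/(z²) ≅ 𝔽₂[X,Y]/(X² + Y² − 1)` sending `T` to the class of `X` and `z` to the class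
of `X + Y + 1`; in particular `𝔽₂[X,Y]/(X² + Y² − 1)` is not reduced, and consequently
`ℤ₂[X,Y]/(X² + Y² − 1)` is not formally smooth over `ℤ₂`. -/
theorem circle_over_F2_nonreduced_and_not_formally_smooth :
    ((X 0 ^ 2 + X 1 ^ 2 - 1 : MvPolynomial (Fin 2) (ZMod 2)) = (X 0 + X 1 + 1) ^ 2) ∧
    (∃ e : (Polynomial (Polynomial (ZMod 2)) ⧸
          Ideal.span {(Polynomial.X : Polynomial (Polynomial (ZMod 2))) ^ 2}) ≃ₐ[ZMod 2]
        (MvPolynomial (Fin 2) (ZMod 2) ⧸ Ideal.span {X 0 ^ 2 + X 1 ^ 2 - 1}),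
      e (Ideal.Quotient.mk _ (Polynomial.C Polynomial.X)) = Ideal.Quotient.mk _ (X 0) ∧
      e (Ideal.Quotient.mk _ Polynomial.X) = Ideal.Quotient.mk _ (X 0 + X 1 + 1)) ∧
    (¬ IsReduced (MvPolynomial (Fin 2) (ZMod 2) ⧸
        Ideal.span {(X 0 ^ 2 + X 1 ^ 2 - 1 : MvPolynomial (Fin 2) (ZMod 2))})) ∧
    (¬ Algebra.FormallySmooth ℤ_[2] (MvPolynomial (Fin 2) ℤ_[2] ⧸
        Ideal.span {(X 0 ^ 2 + X 1 ^ 2 - 1 : MvPolynomial (Fin 2) ℤ_[2])})) := by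
  have h2 : (2 : ZMod 2) = 0 := rfl
  let _ : Algebra ℤ_[2] (ZMod 2) := PadicInt.toZMod.toAlgebra
  refine ⟨sq_add_sq_sub_one_eq_of_two_eq_zero (two_eq_zero_of_algebra h2) _ _,
    ⟨CircleRing.equivTruncPoly h2, CircleRing.equivTruncPoly_mk_C_X h2,
      CircleRing.equivTruncPoly_mk_X h2⟩,
    CircleRing.not_isReduced h2, CircleRing.not_formallySmooth h2⟩
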